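/- arXiv:2505.04194 — 5 statements merged into one kernel-verified Lean document; each statement's English description precedes it below -/
import Mathlib

section
/- Let H be a real Hilbert space, u : [0,∞) → H continuously differentiable with derivative u', E : H → ℝ, e₀ ∈ ℝ, K > 0, θ ∈ (0, 1/2], and t₀ ≥ 0. Suppose that for every t ≥ 0 the function s ↦ E(u(s)) is differentiable at t with derivative −‖u'(t)‖², and that for all t ≥ t₀ one has E(u(t)) ≥ e₀ and ‖u'(t)‖ ≥ K·(E(u(t)) − e₀)^{1−θ}. Then ∫_{t₀}^∞ ‖u'(t)‖ dt ≤ (1/(θK))·(E(u(t₀)) − e₀)^θ; in particular the trajectory has finite length. -/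
/-!
Along the trajectory `φ := E ∘ u - e₀` is nonnegative with `φ' = -‖u'‖²`. Where `φ > 0`, the
Łojasiewicz inequality turns this into `d/dt (-φ ^ θ / (θ K)) = φ ^ (θ - 1) ‖u'‖² / K ≥ ‖u'‖`;
once `φ` reaches `0` it stays there and `u'` vanishes. So `‖u'‖` is dominated by the right
derivative of `-φ ^ θ / (θ K)`, and every `∫_{t₀}^b ‖u'‖` is at most `φ(t₀) ^ θ / (θ K)`.
-/

open MeasureTheory Set Filter

lemma le_rpow_sub_one_mul_sq_div {K θ p n : ℝ} (hK : 0 < K) (hp : 0 < p)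
    (h : K * p ^ (1 - θ) ≤ n) : n ≤ p ^ (θ - 1) * n ^ 2 / K := by
  have hn : 0 ≤ n := (mul_pos hK (Real.rpow_pos_of_pos hp _)).le.trans h
  have hinv : p ^ (θ - 1) * p ^ (1 - θ) = 1 := by
    rw [← Real.rpow_add hp, sub_add_sub_cancel', sub_self, Real.rpow_zero]
  rw [le_div_iff₀ hK]
  calc n * K = p ^ (θ - 1) * (K * p ^ (1 - θ)) * n := by rw [mul_left_comm, hinv]; ring
    _ ≤ p ^ (θ - 1) * n * n := by gcongr
    _ = p ^ (θ - 1) * n ^ 2 := by ring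

section Lojasiewicz

variable {f φ : ℝ → ℝ} {a K θ : ℝ}

lemma antitoneOn_Ici_of_hasDerivAt_neg_sq (hφ : ∀ t ≥ a, HasDerivAt φ (-f t ^ 2) t) :
    AntitoneOn φ (Ici a) :=
  antitoneOn_of_hasDerivWithinAt_nonpos (convex_Ici a)
    (fun t ht => (hφ t ht).continuousAt.continuousWithinAt)
    (fun t ht => (hφ t (interior_subset ht)).hasDerivWithinAt)
    fun _ _ => neg_nonpos.2 (sq_nonneg _)

lemma eq_zero_of_hasDerivAt_neg_sq (hφ : ∀ t ≥ a, HasDerivAt φ (-f t ^ 2) t)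
    (hφ0 : ∀ t ≥ a, 0 ≤ φ t) {t : ℝ} (ht : a < t) (hφt : φ t = 0) : f t = 0 := by
  have hmin : IsLocalMin φ t :=
    mem_of_superset (Ici_mem_nhds ht) fun s hs => hφt ▸ hφ0 s hs
  simpa using hmin.hasDerivAt_eq_zero (hφ t ht.le)

lemma hasDerivWithinAt_Ioi_neg_rpow_div (hK : K ≠ 0) (hθ : 0 < θ)
    (hφ : ∀ t ≥ a, HasDerivAt φ (-f t ^ 2) t) (hφ0 : ∀ t ≥ a, 0 ≤ φ t) {t : ℝ} (ht : a < t) :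
    HasDerivWithinAt (fun s => -φ s ^ θ / (θ * K)) (φ t ^ (θ - 1) * f t ^ 2 / K) (Ioi t) t := by
  rcases (hφ0 t ht.le).lt_or_eq with hpos | hzero
  · refine ((((hφ t ht.le).rpow_const (Or.inl hpos.ne')).fun_neg.div_const (θ * K)).congr_deriv
      ?_).hasDerivWithinAt
    field_simp
  · have hvanish : ∀ s ≥ t, φ s = 0 := fun s hs =>
      le_antisymm (hzero ▸ antitoneOn_Ici_of_hasDerivAt_neg_sq hφ ht.le (ht.le.trans hs) hs)
        (hφ0 s (ht.le.trans hs))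
    have hft := eq_zero_of_hasDerivAt_neg_sq hφ hφ0 ht hzero.symm
    refine ((hasDerivWithinAt_const t (Ioi t) (0 : ℝ)).congr (fun s hs => ?_) ?_).congr_deriv
      (by simp [hft])
    · simp [hvanish s (le_of_lt hs), Real.zero_rpow hθ.ne']
    · simp [hvanish t le_rfl, Real.zero_rpow hθ.ne']

lemma intervalIntegral_le_of_lojasiewicz (hK : 0 < K) (hθ : 0 < θ) (hf : ContinuousOn f (Ici a))
    (hφ : ∀ t ≥ a, HasDerivAt φ (-f t ^ 2) t) (hφ0 : ∀ t ≥ a, 0 ≤ φ t)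
    (hLS : ∀ t ≥ a, K * φ t ^ (1 - θ) ≤ f t) {b : ℝ} (hab : a ≤ b) :
    ∫ t in a..b, f t ≤ 1 / (θ * K) * φ a ^ θ := by
  have hφcont : ContinuousOn φ (Icc a b) := fun t ht =>
    (hφ t ht.1).continuousAt.continuousWithinAt
  have hdom : ∀ t ∈ Ioo a b, f t ≤ φ t ^ (θ - 1) * f t ^ 2 / K := by
    intro t ht
    rcases (hφ0 t ht.1.le).lt_or_eq with hpos | hzero
    · exact le_rpow_sub_one_mul_sq_div hK hpos (hLS t ht.1.le)
    · simp [eq_zero_of_hasDerivAt_neg_sq hφ hφ0 ht.1 hzero.symm]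
  have hle := intervalIntegral.integral_le_sub_of_hasDeriv_right_of_le hab
    ((hφcont.rpow_const fun _ _ => Or.inr hθ.le).fun_neg.div_const (θ * K))
    (fun t ht => hasDerivWithinAt_Ioi_neg_rpow_div hK.ne' hθ hφ hφ0 ht.1)
    ((hf.mono Icc_subset_Ici_self).integrableOn_compact isCompact_Icc) hdom
  have hb : 0 ≤ φ b ^ θ / (θ * K) :=
    div_nonneg (Real.rpow_nonneg (hφ0 b hab) θ) (mul_pos hθ hK).le
  rw [one_div_mul_eq_div]
  linarith [neg_div (θ * K) (φ b ^ θ), neg_div (θ * K) (φ a ^ θ)]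

lemma integrableOn_Ici_norm_and_integral_le {E : Type*} [NormedAddCommGroup E] {g : ℝ → E}
    {a C : ℝ} (hg : ContinuousOn g (Ici a)) (hC : ∀ b ≥ a, ∫ t in a..b, ‖g t‖ ≤ C) :
    IntegrableOn (fun t => ‖g t‖) (Ici a) ∧ ∫ t in Ici a, ‖g t‖ ≤ C := by
  have hint : IntegrableOn (fun t => ‖g t‖) (Ioi a) := by
    refine integrableOn_Ioi_of_intervalIntegral_norm_bounded C a (fun b => ?_) tendsto_id
      (by filter_upwards [eventually_ge_atTop a] with b hb; simpa using hC b hb)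
    exact (hg.norm.mono Icc_subset_Ici_self).integrableOn_compact isCompact_Icc
      |>.mono_set Ioc_subset_Icc_self
  refine ⟨(integrableOn_Ici_iff_integrableOn_Ioi).2 hint, ?_⟩
  rw [integral_Ici_eq_integral_Ioi]
  exact le_of_tendsto (intervalIntegral_tendsto_integral_Ioi a hint tendsto_id)
    (eventually_ge_atTop a |>.mono hC)

theorem trajectory_finite_length_general
    {H : Type*} [NormedAddCommGroup H] [InnerProductSpace ℝ H]
    (u u' : ℝ → H) (E : H → ℝ) (e₀ K θ t₀ : ℝ)
    (hu' : ContinuousOn u' (Set.Ici 0))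
    (hK : 0 < K) (hθ : θ ∈ Set.Ioc (0 : ℝ) (1 / 2)) (ht₀ : 0 ≤ t₀)
    (hderiv : ∀ t ≥ (0 : ℝ), HasDerivAt (fun s => E (u s)) (-‖u' t‖ ^ 2) t)
    (hE : ∀ t ≥ t₀, E (u t) ≥ e₀)
    (hLS : ∀ t ≥ t₀, ‖u' t‖ ≥ K * (E (u t) - e₀) ^ (1 - θ)) :
    IntegrableOn (fun t => ‖u' t‖) (Set.Ici t₀) ∧
      ∫ t in Set.Ici t₀, ‖u' t‖ ≤ 1 / (θ * K) * (E (u t₀) - e₀) ^ θ := by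
  have hcont : ContinuousOn u' (Ici t₀) := hu'.mono (Ici_subset_Ici.2 ht₀)
  exact integrableOn_Ici_norm_and_integral_le hcont fun b hb =>
    intervalIntegral_le_of_lojasiewicz (φ := fun t => E (u t) - e₀) hK hθ.1 hcont.norm
      (fun t ht => (hderiv t (ht₀.trans ht)).sub_const e₀)
      (fun t ht => sub_nonneg.2 (hE t ht)) hLS hb

/-- Finite length of a gradient-flow trajectory satisfying the energy identity
and the Łojasiewicz–Simon inequality on `[t₀, ∞)`. -/
theorem trajectory_finite_length
    {H : Type*} [NormedAddCommGroup H] [InnerProductSpace ℝ H]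
    (u u' : ℝ → H) (E : H → ℝ) (e₀ K θ t₀ : ℝ)
    (hu : ∀ s ≥ (0 : ℝ), HasDerivAt u (u' s) s) (hu' : ContinuousOn u' (Set.Ici 0))
    (hK : 0 < K) (hθ : θ ∈ Set.Ioc (0 : ℝ) (1 / 2)) (ht₀ : 0 ≤ t₀)
    (hderiv : ∀ t ≥ (0 : ℝ), HasDerivAt (fun s => E (u s)) (-‖u' t‖ ^ 2) t)
    (hE : ∀ t ≥ t₀, E (u t) ≥ e₀)
    (hLS : ∀ t ≥ t₀, ‖u' t‖ ≥ K * (E (u t) - e₀) ^ (1 - θ)) :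
    IntegrableOn (fun t => ‖u' t‖) (Set.Ici t₀) ∧
      ∫ t in Set.Ici t₀, ‖u' t‖ ≤ 1 / (θ * K) * (E (u t₀) - e₀) ^ θ :=
  trajectory_finite_length_general u u' E e₀ K θ t₀ hu' hK hθ ht₀ hderiv hE hLS
end Lojasiewicz
end

section
/- Let H be a real Hilbert space, u : [0,∞) → H continuously differentiable with derivative u', E : H → ℝ, e₀ ∈ ℝ, K > 0, θ ∈ (0, 1/2], and t₀ ≥ 0. Suppose that for every t ≥ 0 the function s ↦ E(u(s)) is differentiable at t with derivative −‖u'(t)‖², and that for all t ≥ t₀ one has E(u(t)) ≥ e₀ and ‖u'(t)‖ ≥ K·(E(u(t)) − e₀)^{1−θ}. Then there exists u^∞ ∈ H such that u(t) → u^∞ in the norm of H as t → ∞. -/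
/-
The excess energy `f = E(u) - e₀` decreases at rate `‖u'‖²`, and the Łojasiewicz inequality
`‖u'‖ ≥ K f^(1-θ)` turns this into `-(f^θ)' = θ ‖u'‖² f^(θ-1) ≥ θ K ‖u'‖`. Integrating, the
length `∫ ‖u'‖` of the trajectory is bounded by `f(t₀)^θ / (θ K)`, so `u'` is integrable on
`(t₀, ∞)` and `u(t)` has a limit. If instead the energy reaches its lower bound `e₀` at some
time, it stays there, so `u'` vanishes from then on.
-/

open Filter Set MeasureTheory

section

variable {H : Type*} [NormedAddCommGroup H]

theorem lojasiewicz_rate_le {x g K θ : ℝ} (hx : 0 < x) (hθ : 0 ≤ θ) (hg : 0 ≤ g)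
    (hLS : K * x ^ (1 - θ) ≤ g) : θ * K * g ≤ θ * g ^ 2 * x ^ (θ - 1) := by
  have hcancel : x ^ (1 - θ) * x ^ (θ - 1) = 1 := by
    rw [← Real.rpow_add hx, show 1 - θ + (θ - 1) = 0 by ring, Real.rpow_zero]
  have hscale : 0 ≤ θ * g * x ^ (θ - 1) := by positivity
  calc θ * K * g = K * x ^ (1 - θ) * (θ * g * x ^ (θ - 1)) := by
        linear_combination (-(θ * K * g)) * hcancel
    _ ≤ g * (θ * g * x ^ (θ - 1)) := mul_le_mul_of_nonneg_right hLS hscale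
    _ = θ * g ^ 2 * x ^ (θ - 1) := by ring

theorem integral_norm_le_of_lojasiewicz {v : ℝ → H} {f : ℝ → ℝ} {a b K θ : ℝ} (hab : a ≤ b)
    (hθ : 0 ≤ θ) (hv : ContinuousOn v (Icc a b))
    (hf : ∀ t ∈ Icc a b, HasDerivAt f (-‖v t‖ ^ 2) t) (hpos : ∀ t ∈ Icc a b, 0 < f t)
    (hLS : ∀ t ∈ Icc a b, K * f t ^ (1 - θ) ≤ ‖v t‖) :
    ∫ t in a..b, θ * K * ‖v t‖ ≤ f a ^ θ - f b ^ θ := by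
  have hderiv : ∀ t ∈ Icc a b,
      HasDerivAt (fun s => -f s ^ θ) (θ * ‖v t‖ ^ 2 * f t ^ (θ - 1)) t := fun t ht =>
    ((hf t ht).rpow_const (Or.inl (hpos t ht).ne')).fun_neg.congr_deriv (by ring)
  have h := intervalIntegral.integral_le_sub_of_hasDeriv_right_of_le
    (φ := fun t => θ * K * ‖v t‖) hab
    (fun t ht => (hderiv t ht).continuousAt.continuousWithinAt)
    (fun t ht => (hderiv t (Ioo_subset_Icc_self ht)).hasDerivWithinAt)
    (continuousOn_const.mul hv.norm).integrableOn_Icc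
    (fun t ht => lojasiewicz_rate_le (hpos t (Ioo_subset_Icc_self ht)) hθ (norm_nonneg _)
      (hLS t (Ioo_subset_Icc_self ht)))
  linarith [neg_sub_neg (f b ^ θ) (f a ^ θ)]

theorem integrableOn_Ioi_of_lojasiewicz {v : ℝ → H} {f : ℝ → ℝ} {a K θ : ℝ} (hK : 0 < K)
    (hθ : 0 < θ) (hv : ContinuousOn v (Ici a)) (hf : ∀ t ≥ a, HasDerivAt f (-‖v t‖ ^ 2) t)
    (hpos : ∀ t ≥ a, 0 < f t) (hLS : ∀ t ≥ a, K * f t ^ (1 - θ) ≤ ‖v t‖) :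
    IntegrableOn v (Ioi a) := by
  refine integrableOn_Ioi_of_intervalIntegral_norm_bounded (f a ^ θ / (θ * K)) a
    (fun b => (hv.mono Icc_subset_Ici_self).integrableOn_Icc.mono_set Ioc_subset_Icc_self)
    tendsto_id ?_
  filter_upwards [eventually_ge_atTop a] with b hab
  have h := integral_norm_le_of_lojasiewicz hab hθ.le (hv.mono Icc_subset_Ici_self)
    (fun t ht => hf t ht.1) (fun t ht => hpos t ht.1) (fun t ht => hLS t ht.1)
  rw [intervalIntegral.integral_const_mul] at h
  show ∫ t in a..b, ‖v t‖ ≤ _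
  rw [le_div_iff₀ (by positivity), mul_comm]
  linarith [Real.rpow_nonneg (hpos b hab).le θ]

theorem eqOn_zero_of_hasDerivAt_neg_norm_sq {v : ℝ → H} {f : ℝ → ℝ} {a m : ℝ}
    (hf : ∀ t ≥ a, HasDerivAt f (-‖v t‖ ^ 2) t) (hm : ∀ t ≥ a, m ≤ f t) (ha : f a = m) :
    EqOn v 0 (Ioi a) := by
  have hanti : AntitoneOn f (Ici a) := by
    refine antitoneOn_of_hasDerivWithinAt_nonpos (f' := fun t => -‖v t‖ ^ 2) (convex_Ici a)
      (fun t ht => (hf t ht).continuousAt.continuousWithinAt) (fun t ht => ?_) (fun t _ => ?_)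
    · rw [interior_Ici] at ht
      exact (hf t ht.le).hasDerivWithinAt
    · exact neg_nonpos.2 (sq_nonneg _)
  intro t ht
  have hmin : IsLocalMin f t := by
    have hft : f t = m :=
      le_antisymm (ha ▸ hanti self_mem_Ici (mem_Ici.2 ht.le) ht.le)
        (hm t ht.le)
    filter_upwards [Ioi_mem_nhds ht] with s hs
    exact hft ▸ hm s hs.le
  simpa using hmin.hasDerivAt_eq_zero (hf t ht.le)

end

/-- Convergence to equilibrium of a gradient-flow trajectory satisfying the
energy identity and the Łojasiewicz–Simon inequality on `[t₀, ∞)`. -/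
theorem trajectory_converges
    {H : Type*} [NormedAddCommGroup H] [InnerProductSpace ℝ H] [CompleteSpace H]
    (u u' : ℝ → H) (E : H → ℝ) (e₀ K θ t₀ : ℝ)
    (hu : ∀ s ≥ (0 : ℝ), HasDerivAt u (u' s) s) (hu' : ContinuousOn u' (Set.Ici 0))
    (hK : 0 < K) (hθ : θ ∈ Set.Ioc (0 : ℝ) (1 / 2)) (ht₀ : 0 ≤ t₀)
    (hderiv : ∀ t ≥ (0 : ℝ), HasDerivAt (fun s => E (u s)) (-‖u' t‖ ^ 2) t)
    (hE : ∀ t ≥ t₀, E (u t) ≥ e₀)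
    (hLS : ∀ t ≥ t₀, ‖u' t‖ ≥ K * (E (u t) - e₀) ^ (1 - θ)) :
    ∃ uinf : H, Tendsto u atTop (nhds uinf) := by
  obtain ⟨a, ha, hint⟩ : ∃ a ≥ t₀, IntegrableOn u' (Ioi a) := by
    by_cases hpos : ∀ t ≥ t₀, 0 < E (u t) - e₀
    · exact ⟨t₀, le_rfl, integrableOn_Ioi_of_lojasiewicz hK hθ.1
        (hu'.mono (Ici_subset_Ici.2 ht₀)) (fun t ht => (hderiv t (ht₀.trans ht)).sub_const e₀)
        hpos hLS⟩
    · push Not at hpos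
      obtain ⟨t₁, ht₁, hle⟩ := hpos
      have hvanish : EqOn u' 0 (Ioi t₁) :=
        eqOn_zero_of_hasDerivAt_neg_norm_sq (fun t ht => hderiv t (by linarith))
          (fun t ht => hE t (ht₁.trans ht)) (le_antisymm (by linarith) (hE t₁ ht₁))
      exact ⟨t₁, ht₁, integrableOn_zero.congr_fun hvanish.symm measurableSet_Ioi⟩
  exact ⟨_, tendsto_limUnder_of_hasDerivAt_of_integrableOn_Ioi
    (fun t ht => hu t (by linarith [mem_Ioi.1 ht])) hint⟩
end

section
/- Let H be a real Hilbert space, u : [0,∞) → H continuously differentiable with derivative u', E : H → ℝ, e₀ ∈ ℝ, K > 0, θ ∈ (0, 1/2], and t₀ ≥ 0. Suppose that for every t ≥ 0 the function s ↦ E(u(s)) is differentiable at t with derivative −‖u'(t)‖², that for all t ≥ t₀ one has E(u(t)) ≥ e₀ and ‖u'(t)‖ ≥ K·(E(u(t)) − e₀)^{1−θ}, and that u(t) → u^∞ in H as t → ∞. Then for all t ≥ t₀, ‖u(t) − u^∞‖ ≤ (1/(θK))·(E(u(t)) − e₀)^θ. -/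
open Filter

/-- Key estimate: distance to the equilibrium is controlled by a power of the
energy gap. -/
theorem distance_to_equilibrium_bound
    {H : Type*} [NormedAddCommGroup H] [InnerProductSpace ℝ H]
    (u u' : ℝ → H) (E : H → ℝ) (e₀ K θ t₀ : ℝ) (uinf : H)
    (hu : ∀ s ≥ (0 : ℝ), HasDerivAt u (u' s) s) (hu' : ContinuousOn u' (Set.Ici 0))
    (hK : 0 < K) (hθ : θ ∈ Set.Ioc (0 : ℝ) (1 / 2)) (ht₀ : 0 ≤ t₀)
    (hderiv : ∀ t ≥ (0 : ℝ), HasDerivAt (fun s => E (u s)) (-‖u' t‖ ^ 2) t)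
    (hE : ∀ t ≥ t₀, E (u t) ≥ e₀)
    (hLS : ∀ t ≥ t₀, ‖u' t‖ ≥ K * (E (u t) - e₀) ^ (1 - θ))
    (hlim : Tendsto u atTop (nhds uinf)) :
    ∀ t ≥ t₀, ‖u t - uinf‖ ≤ 1 / (θ * K) * (E (u t) - e₀) ^ θ := by
  obtain ⟨hθ0, hθ2⟩ := hθ
  set F : ℝ → ℝ := fun s => E (u s) - e₀ with hFdef
  have hF' : ∀ s ≥ (0 : ℝ), HasDerivAt F (-‖u' s‖ ^ 2) s := fun s hs =>
    (hderiv s hs).sub_const e₀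
  have hFcont : ContinuousOn F (Set.Ici 0) := fun s hs =>
    ((hF' s hs).continuousAt).continuousWithinAt
  have hucont : ContinuousOn u (Set.Ici 0) := fun s hs =>
    ((hu s hs).continuousAt).continuousWithinAt
  have hanti : AntitoneOn F (Set.Ici 0) := by
    apply antitoneOn_of_deriv_nonpos (convex_Ici 0) hFcont
    · intro s hs
      rw [interior_Ici] at hs
      exact ((hF' s hs.le).differentiableAt).differentiableWithinAt
    · intro s hs
      rw [interior_Ici] at hs
      rw [(hF' s hs.le).deriv]
      have : (0:ℝ) ≤ ‖u' s‖ ^ 2 := by positivity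
      linarith
  -- key integral estimate when F is positive on [a,b]
  have key : ∀ a b : ℝ, t₀ ≤ a → a ≤ b → (∀ s ∈ Set.Icc a b, 0 < F s) →
      ‖u b - u a‖ ≤ 1 / (θ * K) * F a ^ θ := by
    intro a b ha hab hpos
    have ha0 : (0:ℝ) ≤ a := ht₀.trans ha
    have hsub : Set.Icc a b ⊆ Set.Ici (0:ℝ) := fun s hs => Set.mem_Ici.2 (ha0.trans hs.1)
    have hθK : (0:ℝ) < θ * K := mul_pos hθ0 hK
    set φ : ℝ → ℝ := fun s => ‖u' s‖ ^ 2 * θ * F s ^ (θ - 1) with hφdef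
    have hG' : ∀ s ∈ Set.Icc a b, HasDerivAt (fun x => F x ^ θ) (-φ s) s := by
      intro s hs
      have h := (hF' s (hsub hs)).rpow_const (p := θ) (Or.inl (hpos s hs).ne')
      convert h using 1
      simp only [hφdef]
      ring
    have hpt : ∀ s ∈ Set.Icc a b, ‖u' s‖ ≤ 1 / (θ * K) * φ s := by
      intro s hs
      have hs0 : t₀ ≤ s := ha.trans hs.1
      have hFs : 0 < F s := hpos s hs
      have hmul : F s ^ (θ - 1) * F s ^ (1 - θ) = 1 := by
        rw [← Real.rpow_add hFs]
        norm_num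
      have h5 : 0 ≤ (‖u' s‖ - K * F s ^ (1 - θ)) * (θ * F s ^ (θ - 1) * ‖u' s‖) :=
        mul_nonneg (sub_nonneg.2 (hLS s hs0)) (by positivity)
      have h6 : K * θ * (F s ^ (θ - 1) * F s ^ (1 - θ)) * ‖u' s‖ = K * θ * ‖u' s‖ := by
        rw [hmul]; ring
      show ‖u' s‖ ≤ 1 / (θ * K) * (‖u' s‖ ^ 2 * θ * F s ^ (θ - 1))
      rw [one_div, inv_mul_eq_div, le_div_iff₀ hθK]
      nlinarith [h5, h6]
    have hB' : ∀ x ∈ Set.Ico a b, HasDerivWithinAt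
        (fun y => 1 / (θ * K) * (F a ^ θ - F y ^ θ)) (1 / (θ * K) * φ x) (Set.Ici x) x := by
      intro x hx
      have h := ((hG' x (Set.Ico_subset_Icc_self hx)).const_sub (F a ^ θ)).const_mul
        (1 / (θ * K))
      have h2 : 1 / (θ * K) * - -φ x = 1 / (θ * K) * φ x := by ring
      rw [h2] at h
      exact h.hasDerivWithinAt
    have hBcont : ContinuousOn (fun y => 1 / (θ * K) * (F a ^ θ - F y ^ θ)) (Set.Icc a b) :=
      continuousOn_const.mul (continuousOn_const.sub
        ((hFcont.mono hsub).rpow_const fun s hs => Or.inr hθ0.le))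
    have hmain := image_norm_le_of_norm_deriv_right_le_deriv_boundary'
      (f := fun x => u x - u a) (f' := u')
      ((hucont.mono hsub).sub continuousOn_const)
      (fun x hx => ((hu x (hsub (Set.Ico_subset_Icc_self hx))).sub_const (u a)).hasDerivWithinAt)
      (by simp) hBcont hB' (fun x hx => hpt x (Set.Ico_subset_Icc_self hx))
    have hfinal := hmain ⟨hab, le_refl b⟩
    have h1 : 0 ≤ F b ^ θ := Real.rpow_nonneg (hpos b ⟨hab, le_refl b⟩).le θ
    have h2 : 0 ≤ 1 / (θ * K) := by positivity
    nlinarith [hfinal]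
  -- stationarity after the energy gap vanishes
  have stat : ∀ T, t₀ ≤ T → F T = 0 → ∀ s ≥ T, u s = u T := by
    intro T hT hFT
    have hT0 : (0:ℝ) ≤ T := ht₀.trans hT
    have hzero : ∀ s ≥ T, F s = 0 := by
      intro s hs
      have h1 : F s ≤ F T :=
        hanti (Set.mem_Ici.2 hT0) (Set.mem_Ici.2 (hT0.trans hs)) hs
      have h2 : 0 ≤ F s := sub_nonneg.2 (hE s (hT.trans hs))
      rw [hFT] at h1
      linarith
    have hu0 : ∀ s ≥ T, u' s = 0 := by
      intro s hs
      have hs0 : (0:ℝ) ≤ s := hT0.trans hs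
      have h1 : HasDerivWithinAt F (-‖u' s‖ ^ 2) (Set.Ici s) s :=
        (hF' s hs0).hasDerivWithinAt
      have heq : Set.EqOn F (fun _ => (0:ℝ)) (Set.Ici s) := fun x hx =>
        hzero x (hs.trans hx)
      have h2 : HasDerivWithinAt F 0 (Set.Ici s) s :=
        (hasDerivWithinAt_const s (Set.Ici s) (0:ℝ)).congr heq (hzero s hs)
      have h3 : -‖u' s‖ ^ 2 = 0 := by
        have e1 := h1.derivWithin (uniqueDiffOn_Ici s s Set.self_mem_Ici)
        have e2 := h2.derivWithin (uniqueDiffOn_Ici s s Set.self_mem_Ici)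
        rw [← e1, ← e2]
      have : ‖u' s‖ = 0 := by nlinarith [norm_nonneg (u' s)]
      exact norm_eq_zero.mp this
    intro s hs
    have hf : ∀ x ∈ Set.Icc T s, HasDerivWithinAt u (u' x) (Set.Icc T s) x := fun x hx =>
      (hu x (hT0.trans hx.1)).hasDerivWithinAt
    have hbd : ∀ x ∈ Set.Ico T s, ‖u' x‖ ≤ 0 := fun x hx => by
      rw [hu0 x hx.1, norm_zero]
    have hle := norm_image_sub_le_of_norm_deriv_le_segment' hf hbd s ⟨hs, le_refl s⟩
    rw [zero_mul] at hle
    exact sub_eq_zero.mp (norm_le_zero_iff.mp hle)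
  intro t ht
  have ht0 : (0:ℝ) ≤ t := ht₀.trans ht
  have hFt : 0 ≤ F t := sub_nonneg.2 (hE t ht)
  rcases eq_or_lt_of_le hFt with h0 | hpos
  · -- F t = 0
    have hconst := stat t ht h0.symm
    have huinf : uinf = u t := by
      refine tendsto_nhds_unique hlim ?_
      refine Tendsto.congr' ?_ tendsto_const_nhds
      filter_upwards [eventually_ge_atTop t] with b hb
      exact (hconst b hb).symm
    show ‖u t - uinf‖ ≤ 1 / (θ * K) * F t ^ θ
    rw [huinf, sub_self, norm_zero, ← h0, Real.zero_rpow hθ0.ne', mul_zero]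
  · -- F t > 0
    have hbound : ∀ b ≥ t, ‖u b - u t‖ ≤ 1 / (θ * K) * F t ^ θ := by
      by_cases hZ : ∃ s, t ≤ s ∧ F s = 0
      · set Z : Set ℝ := {s | t ≤ s ∧ F s = 0} with hZdef
        have hZne : Z.Nonempty := hZ
        have hZbdd : BddBelow Z := ⟨t, fun s hs => hs.1⟩
        set T := sInf Z with hTdef
        have htT : t ≤ T := le_csInf hZne fun s hs => hs.1
        have hT0 : (0:ℝ) ≤ T := ht0.trans htT
        have hTc : T ∈ closure Z := csInf_mem_closure hZne hZbdd
        haveI : (nhdsWithin T Z).NeBot := mem_closure_iff_nhdsWithin_neBot.mp hTc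
        have hFT : F T = 0 := by
          have h1 : Tendsto F (nhdsWithin T Z) (nhds (F T)) :=
            ((hF' T hT0).continuousAt).continuousWithinAt
          have h2 : Tendsto F (nhdsWithin T Z) (nhds 0) := by
            refine Tendsto.congr' ?_ tendsto_const_nhds
            filter_upwards [self_mem_nhdsWithin] with s hs
            exact hs.2.symm
          exact tendsto_nhds_unique h1 h2
        have htltT : t < T := lt_of_le_of_ne htT (by
          intro h; rw [← h] at hFT; exact hpos.ne hFT.symm)
        have hposOn : ∀ s, t ≤ s → s < T → 0 < F s := by
          intro s hts hsT
          have h1 : 0 ≤ F s := sub_nonneg.2 (hE s (ht.trans hts))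
          rcases eq_or_lt_of_le h1 with h | h
          · exact absurd (csInf_le hZbdd ⟨hts, h.symm⟩) (not_le.mpr hsT)
          · exact h
        have hkeyT : ∀ b, t ≤ b → b < T → ‖u b - u t‖ ≤ 1 / (θ * K) * F t ^ θ := by
          intro b htb hbT
          exact key t b ht htb fun s hs => hposOn s hs.1 (lt_of_le_of_lt hs.2 hbT)
        have hTbound : ‖u T - u t‖ ≤ 1 / (θ * K) * F t ^ θ := by
          have hTcl : T ∈ closure (Set.Ioo t T) := by
            rw [closure_Ioo htltT.ne]
            exact ⟨htltT.le, le_refl T⟩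
          haveI : (nhdsWithin T (Set.Ioo t T)).NeBot :=
            mem_closure_iff_nhdsWithin_neBot.mp hTcl
          have h1 : Tendsto (fun b => ‖u b - u t‖) (nhdsWithin T (Set.Ioo t T))
              (nhds ‖u T - u t‖) := by
            have : ContinuousAt u T := (hu T hT0).continuousAt
            exact ((this.continuousWithinAt.sub continuousWithinAt_const).norm)
          refine le_of_tendsto h1 ?_
          filter_upwards [self_mem_nhdsWithin] with b hb
          exact hkeyT b hb.1.le hb.2
        intro b hb
        rcases lt_or_ge b T with h | h
        · exact hkeyT b hb h
        · rw [stat T (ht.trans htT) hFT b h, stat T (ht.trans htT) hFT T le_rfl]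
          exact hTbound
      · push_neg at hZ
        intro b hb
        refine key t b ht hb fun s hs => ?_
        have h1 : 0 ≤ F s := sub_nonneg.2 (hE s (ht.trans hs.1))
        exact lt_of_le_of_ne h1 fun h => hZ s hs.1 h.symm
    have hlim2 : Tendsto (fun b => ‖u b - u t‖) atTop (nhds ‖uinf - u t‖) :=
      (hlim.sub tendsto_const_nhds).norm
    have := le_of_tendsto hlim2 (eventually_atTop.2 ⟨t, hbound⟩)
    rwa [norm_sub_rev] at this
end

section
/- Let H be a real Hilbert space, u : [0,∞) → H continuously differentiable with derivative u', E : H → ℝ, e₀ ∈ ℝ, K > 0, and t₀ ≥ 0. Suppose that for every t ≥ 0 the function s ↦ E(u(s)) is differentiable at t with derivative −‖u'(t)‖², that for all t ≥ t₀ one has E(u(t)) ≥ e₀ and ‖u'(t)‖ ≥ K·(E(u(t)) − e₀)^{1/2}, and that u(t) → u^∞ in H as t → ∞. Then there exist constants κ₁ > 0 and κ₂ > 0 such that ‖u(t) − u^∞‖ ≤ κ₁·e^{−κ₂ t} for all t ≥ t₀; i.e. the solution converges to the equilibrium exponentially in the H-norm. -/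
/-!
With `f t = E (u t) - e₀`, the Łojasiewicz–Simon inequality gives `f' = -‖u'‖² ≤ -K² f`, so
`f` decays like `exp (-K² t)`. By AM–GM, `‖u'‖ ≤ (‖u'‖² + c²) / (2c) = (c² - f') / (2c)` for every
`c > 0`, which bounds the displacement over `[t, t + 1]` by `√(f t - f (t + 1)) ≤ √(f t)`, i.e.
by `C exp (-K² t / 2)`. Summing this geometric series of unit steps up to the limit `u^∞`
gives the exponential rate.
-/

open Filter Set Real

theorem le_mul_exp_of_hasDerivAt_le_neg_mul {f f' : ℝ → ℝ} {c t₀ : ℝ}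
    (hf : ∀ x ≥ t₀, HasDerivAt f (f' x) x) (hf' : ∀ x ≥ t₀, f' x ≤ -c * f x) :
    ∀ t ≥ t₀, f t ≤ f t₀ * exp (-c * (t - t₀)) := by
  set g' : ℝ → ℝ := fun x => f' x * exp (c * x) + f x * (exp (c * x) * c)
  have hg : ∀ x ≥ t₀, HasDerivAt (fun s => f s * exp (c * s)) (g' x) x := fun x hx =>
    (hf x hx).mul (((hasDerivAt_id x).const_mul c).exp.congr_deriv (by simp))
  have hanti : AntitoneOn (fun s => f s * exp (c * s)) (Ici t₀) := by
    refine antitoneOn_of_hasDerivWithinAt_nonpos (f' := g') (convex_Ici t₀)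
      (fun x hx => (hg x hx).continuousAt.continuousWithinAt) (fun x hx => ?_) (fun x hx => ?_)
    · rw [interior_Ici] at hx
      exact (hg x hx.le).hasDerivWithinAt
    · rw [interior_Ici] at hx
      nlinarith [hf' x hx.le, exp_pos (c * x)]
  intro t ht
  have h := hanti self_mem_Ici ht ht
  rw [show -c * (t - t₀) = c * t₀ - c * t by ring, exp_sub, ← mul_div_assoc,
    le_div_iff₀ (exp_pos _)]
  exact h

section Dissipation

variable {E : Type*} [NormedAddCommGroup E] [NormedSpace ℝ E]

theorem norm_sub_le_of_sq_norm_deriv_le_neg_deriv {v v' : ℝ → E} {f f' : ℝ → ℝ} {a b c : ℝ}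
    (hab : a ≤ b) (hv : ∀ x ∈ Icc a b, HasDerivAt v (v' x) x)
    (hf : ∀ x ∈ Icc a b, HasDerivAt f (f' x) x) (hdiss : ∀ x ∈ Icc a b, ‖v' x‖ ^ 2 ≤ -f' x)
    (hc : 0 < c) : ‖v b - v a‖ ≤ (f a - f b + c ^ 2 * (b - a)) / (2 * c) := by
  have hB : ∀ x ∈ Icc a b, HasDerivAt (fun s => (f a - f s + c ^ 2 * (s - a)) / (2 * c))
      ((-f' x + c ^ 2) / (2 * c)) x := fun x hx => by
    simpa using ((((hf x hx).const_sub (f a)).add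
      (((hasDerivAt_id x).sub_const a).const_mul (c ^ 2))).div_const (2 * c))
  refine image_norm_le_of_norm_deriv_right_le_deriv_boundary' (f := fun s => v s - v a)
    (fun x hx => ((hv x hx).sub_const (v a)).continuousAt.continuousWithinAt)
    (fun x hx => ((hv x (Ico_subset_Icc_self hx)).sub_const (v a)).hasDerivWithinAt)
    (by simp) (fun x hx => (hB x hx).continuousAt.continuousWithinAt)
    (fun x hx => (hB x (Ico_subset_Icc_self hx)).hasDerivWithinAt) (fun x hx => ?_)
    (right_mem_Icc.2 hab)
  -- AM–GM: `2 c ‖v'‖ ≤ ‖v'‖² + c²`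
  rw [le_div_iff₀ (by positivity)]
  nlinarith [sq_nonneg (‖v' x‖ - c), hdiss x (Ico_subset_Icc_self hx)]

theorem norm_sub_le_sqrt_of_sq_norm_deriv_le_neg_deriv {v v' : ℝ → E} {f f' : ℝ → ℝ} {a b : ℝ}
    (hab : a ≤ b) (hv : ∀ x ∈ Icc a b, HasDerivAt v (v' x) x)
    (hf : ∀ x ∈ Icc a b, HasDerivAt f (f' x) x) (hdiss : ∀ x ∈ Icc a b, ‖v' x‖ ^ 2 ≤ -f' x) :
    ‖v b - v a‖ ≤ √((b - a) * (f a - f b)) := by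
  rcases hab.eq_or_lt with rfl | hlt
  · simp
  refine le_of_forall_gt_imp_ge_of_dense fun ε hε => ?_
  have hε0 : 0 < ε := (sqrt_nonneg _).trans_lt hε
  have hsq : (b - a) * (f a - f b) < ε ^ 2 := (sqrt_lt' hε0).1 hε
  have hL : 0 < b - a := sub_pos.2 hlt
  refine (norm_sub_le_of_sq_norm_deriv_le_neg_deriv hab hv hf hdiss
    (div_pos hε0 hL)).trans ?_
  rw [div_le_iff₀ (by positivity)]
  field_simp
  nlinarith

end Dissipation

theorem sq_mul_le_sq_of_mul_sqrt_le {K x y : ℝ} (hx : 0 ≤ x) (hK : 0 ≤ K) (h : K * √x ≤ y) :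
    K ^ 2 * x ≤ y ^ 2 := by
  calc K ^ 2 * x = (K * √x) ^ 2 := by rw [mul_pow, sq_sqrt hx]
    _ ≤ y ^ 2 := by gcongr

theorem dist_le_of_dist_add_one_le_mul_exp {α : Type*} [PseudoMetricSpace α] {u : ℝ → α} {L : α}
    {C μ t₀ : ℝ} (hμ : 0 < μ) (hstep : ∀ t ≥ t₀, dist (u t) (u (t + 1)) ≤ C * exp (-μ * t))
    (hlim : Tendsto u atTop (nhds L)) :
    ∀ t ≥ t₀, dist (u t) L ≤ C * exp (-μ * t) / (1 - exp (-μ)) := by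
  intro t ht
  have hgeom (n : ℕ) :
      dist (u (t + n)) (u (t + (n + 1 : ℕ))) ≤ C * exp (-μ * t) * exp (-μ) ^ n := by
    rw [Nat.cast_succ, ← add_assoc]
    refine (hstep (t + n) (le_add_of_le_of_nonneg ht n.cast_nonneg)).trans_eq ?_
    rw [mul_assoc, ← exp_nat_mul, ← exp_add]
    ring_nf
  simpa using dist_le_of_le_geometric_of_tendsto₀ _ _ (exp_lt_one_iff.2 (neg_lt_zero.2 hμ)) hgeom
    (hlim.comp (tendsto_atTop_add_const_left atTop t tendsto_natCast_atTop_atTop))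

theorem exponential_decay_to_equilibrium_general
    {H : Type*} [NormedAddCommGroup H] [InnerProductSpace ℝ H]
    (u u' : ℝ → H) (E : H → ℝ) (e₀ K t₀ : ℝ) (uinf : H)
    (hu : ∀ s ≥ (0 : ℝ), HasDerivAt u (u' s) s)
    (hK : 0 < K) (ht₀ : 0 ≤ t₀)
    (hderiv : ∀ t ≥ (0 : ℝ), HasDerivAt (fun s => E (u s)) (-‖u' t‖ ^ 2) t)
    (hE : ∀ t ≥ t₀, E (u t) ≥ e₀)
    (hLS : ∀ t ≥ t₀, ‖u' t‖ ≥ K * (E (u t) - e₀) ^ ((1 : ℝ) / 2))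
    (hlim : Tendsto u atTop (nhds uinf)) :
    ∃ κ₁ > (0 : ℝ), ∃ κ₂ > (0 : ℝ),
      ∀ t ≥ t₀, ‖u t - uinf‖ ≤ κ₁ * Real.exp (-κ₂ * t) := by
  set f : ℝ → ℝ := fun s => E (u s) - e₀
  set μ : ℝ := K ^ 2 / 2
  have hf : ∀ t ≥ t₀, HasDerivAt f (-‖u' t‖ ^ 2) t := fun t ht =>
    (hderiv t (ht₀.trans ht)).sub_const e₀
  have hf_nonneg : ∀ t ≥ t₀, 0 ≤ f t := fun t ht => sub_nonneg.2 (hE t ht)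
  have hLS_sq (t : ℝ) (ht : t ≥ t₀) : K ^ 2 * f t ≤ ‖u' t‖ ^ 2 :=
    sq_mul_le_sq_of_mul_sqrt_le (hf_nonneg t ht) hK.le (by simpa only [sqrt_eq_rpow] using hLS t ht)
  have hdecay := le_mul_exp_of_hasDerivAt_le_neg_mul (c := K ^ 2) hf fun t ht => by
    linarith [hLS_sq t ht]
  set C : ℝ := √(f t₀) * exp (μ * t₀)
  have hstep : ∀ t ≥ t₀, dist (u t) (u (t + 1)) ≤ C * exp (-μ * t) := fun t ht => by
    have hIcc : ∀ x ∈ Icc t (t + 1), t₀ ≤ x := fun x hx => ht.trans hx.1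
    rw [dist_comm, dist_eq_norm]
    calc ‖u (t + 1) - u t‖ ≤ √((t + 1 - t) * (f t - f (t + 1))) :=
          norm_sub_le_sqrt_of_sq_norm_deriv_le_neg_deriv (by linarith)
            (fun x hx => hu x (ht₀.trans (hIcc x hx))) (fun x hx => hf x (hIcc x hx))
            (fun x _ => (neg_neg _).ge)
      _ ≤ √(f t₀ * exp (-K ^ 2 * (t - t₀))) := by
          refine sqrt_le_sqrt ?_
          linarith [hdecay t ht, hf_nonneg (t + 1) (by linarith)]
      _ = C * exp (-μ * t) := by
          rw [sqrt_mul' _ (exp_pos _).le, ← exp_half, mul_assoc, ← exp_add]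
          simp only [μ]
          ring_nf
  have hμ : 0 < μ := by positivity
  have hr : 0 < 1 - exp (-μ) := sub_pos.2 (exp_lt_one_iff.2 (neg_lt_zero.2 hμ))
  refine ⟨(C + 1) / (1 - exp (-μ)), by positivity, μ, hμ, fun t ht => ?_⟩
  rw [← dist_eq_norm]
  refine (dist_le_of_dist_add_one_le_mul_exp hμ hstep hlim t ht).trans ?_
  rw [div_mul_eq_mul_div]
  gcongr
  linarith

/-- Exponential decay rate to equilibrium in the case `θ = 1/2`. -/
theorem exponential_decay_to_equilibrium
    {H : Type*} [NormedAddCommGroup H] [InnerProductSpace ℝ H]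
    (u u' : ℝ → H) (E : H → ℝ) (e₀ K t₀ : ℝ) (uinf : H)
    (hu : ∀ s ≥ (0 : ℝ), HasDerivAt u (u' s) s) (hu' : ContinuousOn u' (Set.Ici 0))
    (hK : 0 < K) (ht₀ : 0 ≤ t₀)
    (hderiv : ∀ t ≥ (0 : ℝ), HasDerivAt (fun s => E (u s)) (-‖u' t‖ ^ 2) t)
    (hE : ∀ t ≥ t₀, E (u t) ≥ e₀)
    (hLS : ∀ t ≥ t₀, ‖u' t‖ ≥ K * (E (u t) - e₀) ^ ((1 : ℝ) / 2))
    (hlim : Tendsto u atTop (nhds uinf)) :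
    ∃ κ₁ > (0 : ℝ), ∃ κ₂ > (0 : ℝ),
      ∀ t ≥ t₀, ‖u t - uinf‖ ≤ κ₁ * Real.exp (-κ₂ * t) :=
  exponential_decay_to_equilibrium_general u u' E e₀ K t₀ uinf hu hK ht₀ hderiv hE hLS hlim
end

section
/- Let H be a real Hilbert space, u : [0,∞) → H continuously differentiable with derivative u', E : H → ℝ, e₀ ∈ ℝ, K > 0, θ ∈ (0, 1/2), and t₀ ≥ 0. Suppose that for every t ≥ 0 the function s ↦ E(u(s)) is differentiable at t with derivative −‖u'(t)‖², that for all t ≥ t₀ one has E(u(t)) ≥ e₀ and ‖u'(t)‖ ≥ K·(E(u(t)) − e₀)^{1−θ}, and that u(t) → u^∞ in H as t → ∞. Then there exists a constant κ > 0 such that ‖u(t) − u^∞‖ ≤ κ·(1 + t)^{−θ/(1−2θ)} for all t ≥ t₀; i.e. the solution converges to the equilibrium at a polynomial rate in the H-norm. -/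
/-!
Put `f = E ∘ u - e₀`, so that `f ≥ 0` decreases with `f' = -‖u'‖²`, and once `f` vanishes it
stays zero and `u` stops. Where `f > 0` the Łojasiewicz inequality gives
`(f ^ θ)' = θ f ^ (θ - 1) f' ≤ -θ K ‖u'‖`, so the length of the trajectory after time `t`, and
with it `‖u t - u∞‖`, is at most `f t ^ θ / (θ K)`. Squaring the inequality gives
`f' ≤ -K² f ^ (1 + γ)` with `γ = 1 - 2θ`, so `(f ^ (-γ))' ≥ γ K²`: thus `f` decays like
`t ^ (-1/γ)` and `f ^ θ` like `t ^ (-θ/γ)`.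
-/

open Filter Set Real

theorem antitoneOn_Ici_of_hasDerivAt_nonpos {f f' : ℝ → ℝ} {a : ℝ}
    (hf : ∀ x ≥ a, HasDerivAt f (f' x) x) (hf' : ∀ x ≥ a, f' x ≤ 0) : AntitoneOn f (Ici a) :=
  antitoneOn_of_hasDerivWithinAt_nonpos (convex_Ici a)
    (fun x hx => (hf x hx).continuousAt.continuousWithinAt)
    (fun x hx => (hf x (interior_subset hx)).hasDerivWithinAt)
    fun x hx => hf' x (interior_subset hx)

section DifferentialInequality

variable {f f' : ℝ → ℝ} {c γ : ℝ}

theorem rpow_neg_add_le_of_hasDerivAt_le {a b : ℝ} (hγ : 0 ≤ γ) (hab : a ≤ b)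
    (hf : ∀ x ∈ Icc a b, HasDerivAt f (f' x) x) (hpos : ∀ x ∈ Icc a b, 0 < f x)
    (hf' : ∀ x ∈ Icc a b, f' x ≤ -c * f x ^ (1 + γ)) :
    f a ^ (-γ) + γ * c * (b - a) ≤ f b ^ (-γ) := by
  have hderiv : ∀ x ∈ Icc a b,
      HasDerivAt (fun y => f y ^ (-γ)) (f' x * -γ * f x ^ (-γ - 1)) x := fun x hx =>
    (hf x hx).rpow_const (Or.inl (hpos x hx).ne')
  have hslope : ∀ x ∈ Icc a b, γ * c ≤ f' x * -γ * f x ^ (-γ - 1) := by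
    intro x hx
    have hcancel : f x ^ (1 + γ) * f x ^ (-γ - 1) = 1 := by
      rw [← rpow_add (hpos x hx)]; ring_nf; exact rpow_zero _
    have hnonneg : 0 ≤ γ * f x ^ (-γ - 1) := mul_nonneg hγ (rpow_nonneg (hpos x hx).le _)
    calc γ * c = -c * f x ^ (1 + γ) * -(γ * f x ^ (-γ - 1)) := by
          linear_combination (-(γ * c)) * hcancel
      _ ≤ f' x * -(γ * f x ^ (-γ - 1)) :=
          mul_le_mul_of_nonpos_right (hf' x hx) (neg_nonpos.2 hnonneg)
      _ = f' x * -γ * f x ^ (-γ - 1) := by ring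
  have := image_le_of_deriv_right_le_deriv_boundary (a := a) (b := b)
    (f := fun x => f a ^ (-γ) + γ * c * (x - a)) (f' := fun _ => γ * c)
    (B := fun y => f y ^ (-γ)) (B' := fun x => f' x * -γ * f x ^ (-γ - 1))
    (by fun_prop)
    (fun x _ => (((hasDerivAt_id x).sub_const a).const_mul (γ * c)).const_add _
      |>.hasDerivWithinAt.congr_deriv (by simp))
    (by simp) (fun x hx => (hderiv x hx).continuousAt.continuousWithinAt)
    (fun x hx => (hderiv x (Ico_subset_Icc_self hx)).hasDerivWithinAt)
    (fun x hx => hslope x (Ico_subset_Icc_self hx)) ⟨hab, le_rfl⟩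
  simpa using this

theorem exists_le_mul_one_add_rpow_neg_of_hasDerivAt_le {t₀ : ℝ}
    (ht₀ : -1 < t₀) (hc : 0 < c) (hγ : 0 < γ)
    (hf : ∀ t ≥ t₀, HasDerivAt f (f' t) t) (hf0 : ∀ t ≥ t₀, 0 ≤ f t)
    (hf' : ∀ t ≥ t₀, f' t ≤ -c * f t ^ (1 + γ)) :
    ∃ C > 0, ∀ t ≥ t₀, f t ≤ C * (1 + t) ^ (-γ⁻¹) := by
  have hanti : AntitoneOn f (Ici t₀) := antitoneOn_Ici_of_hasDerivAt_nonpos hf fun t ht =>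
    (hf' t ht).trans <| by nlinarith [rpow_nonneg (hf0 t ht) (1 + γ)]
  rcases (hf0 t₀ le_rfl).eq_or_lt with hzero | hft₀
  · refine ⟨1, one_pos, fun t ht => ?_⟩
    have : f t ≤ f t₀ := hanti self_mem_Ici ht ht
    have : 0 ≤ (1 + t) ^ (-γ⁻¹) := rpow_nonneg (by linarith) _
    linarith
  -- `m` is small enough that `m * (1 + t) ≤ f t ^ (-γ)` holds at `t = t₀` and then propagates
  set m := min (γ * c) (f t₀ ^ (-γ) / (1 + t₀))
  have hm : 0 < m := lt_min (by positivity) (div_pos (rpow_pos_of_pos hft₀ _) (by linarith))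
  refine ⟨m ^ (-γ⁻¹), by positivity, fun t ht => ?_⟩
  have h1t : 0 < 1 + t := by linarith
  rcases (hf0 t ht).eq_or_lt with hzero | hft
  · rw [← hzero]; positivity
  have hcmp := rpow_neg_add_le_of_hasDerivAt_le hγ.le ht (fun x hx => hf x hx.1)
    (fun x hx => hft.trans_le (hanti hx.1 ht hx.2)) (fun x hx => hf' x hx.1)
  have hlin : m * (1 + t) ≤ f t ^ (-γ) := by
    have h1 : m * (1 + t₀) ≤ f t₀ ^ (-γ) := (le_div_iff₀ (by linarith)).1 (min_le_right _ _)
    have h2 : m * (t - t₀) ≤ γ * c * (t - t₀) :=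
      mul_le_mul_of_nonneg_right (min_le_left _ _) (sub_nonneg.2 ht)
    linarith
  calc f t = (f t ^ (-γ)) ^ (-γ⁻¹) := by
        rw [← rpow_mul hft.le, neg_mul_neg, mul_inv_cancel₀ hγ.ne', rpow_one]
    _ ≤ (m * (1 + t)) ^ (-γ⁻¹) :=
        rpow_le_rpow_of_nonpos (by positivity) hlin (neg_nonpos.2 (inv_nonneg.2 hγ.le))
    _ = m ^ (-γ⁻¹) * (1 + t) ^ (-γ⁻¹) := mul_rpow hm.le h1t.le

end DifferentialInequality

section LojasiewiczFlow

variable {V : Type*} [NormedAddCommGroup V] {u u' : ℝ → V} {f : ℝ → ℝ} {t₀ K θ : ℝ}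

theorem eq_zero_of_hasDerivAt_neg_sq_of_eq_zero
    (hf : ∀ t ≥ t₀, HasDerivAt f (-‖u' t‖ ^ 2) t) (hf0 : ∀ t ≥ t₀, 0 ≤ f t)
    {x : ℝ} (hx : t₀ ≤ x) (hfx : f x = 0) {y : ℝ} (hxy : x ≤ y) : f y = 0 :=
  le_antisymm (hfx ▸ antitoneOn_Ici_of_hasDerivAt_nonpos hf (fun t _ => by
    nlinarith [sq_nonneg ‖u' t‖]) hx (hx.trans hxy) hxy) (hf0 y (hx.trans hxy))

theorem velocity_eq_zero_of_energy_eq_zero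
    (hf : ∀ t ≥ t₀, HasDerivAt f (-‖u' t‖ ^ 2) t) (hf0 : ∀ t ≥ t₀, 0 ≤ f t)
    {x : ℝ} (hx : t₀ ≤ x) (hfx : f x = 0) : u' x = 0 := by
  have hconst : HasDerivWithinAt f 0 (Ici x) x :=
    (hasDerivWithinAt_const x (Ici x) 0).congr_of_mem
      (fun y hy => eq_zero_of_hasDerivAt_neg_sq_of_eq_zero hf hf0 hx hfx hy) self_mem_Ici
  have := (uniqueDiffOn_Ici x x self_mem_Ici).eq_deriv _ (hf x hx).hasDerivWithinAt hconst
  simpa using this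

theorem hasDerivWithinAt_rpow_of_hasDerivAt_neg_sq (hθ : θ ≠ 0)
    (hf : ∀ t ≥ t₀, HasDerivAt f (-‖u' t‖ ^ 2) t) (hf0 : ∀ t ≥ t₀, 0 ≤ f t)
    {x : ℝ} (hx : t₀ ≤ x) :
    HasDerivWithinAt (fun t => f t ^ θ) (-‖u' x‖ ^ 2 * θ * f x ^ (θ - 1)) (Ici x) x := by
  -- `rpow` is not differentiable at `0`, but a zero of `f` is followed by zeros only
  rcases (hf0 x hx).eq_or_lt with hfx | hfx
  · have hu'x := velocity_eq_zero_of_energy_eq_zero hf hf0 hx hfx.symm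
    simp only [hu'x, norm_zero]
    refine (hasDerivWithinAt_const x (Ici x) (0 : ℝ)).congr_of_mem (fun y hy => ?_) self_mem_Ici
      |>.congr_deriv (by ring)
    rw [eq_zero_of_hasDerivAt_neg_sq_of_eq_zero hf hf0 hx hfx.symm hy, zero_rpow hθ]
  · exact ((hf x hx).rpow_const (Or.inl hfx.ne')).hasDerivWithinAt


theorem le_sq_mul_rpow_div_of_mul_rpow_le {y F : ℝ} (hK : 0 < K) (hF : 0 < F) (hy : 0 ≤ y)
    (h : K * F ^ (1 - θ) ≤ y) : y ≤ y ^ 2 * F ^ (θ - 1) / K := by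
  have hcancel : F ^ (1 - θ) * F ^ (θ - 1) = 1 := by
    rw [← rpow_add hF]; ring_nf; exact rpow_zero _
  have hK_le : K ≤ y * F ^ (θ - 1) := by
    calc K = K * F ^ (1 - θ) * F ^ (θ - 1) := by rw [mul_assoc, hcancel, mul_one]
      _ ≤ y * F ^ (θ - 1) := mul_le_mul_of_nonneg_right h (rpow_nonneg hF.le _)
  rw [le_div_iff₀ hK]
  calc y * K ≤ y * (y * F ^ (θ - 1)) := mul_le_mul_of_nonneg_left hK_le hy
    _ = y ^ 2 * F ^ (θ - 1) := by ring

theorem norm_sub_le_of_lojasiewicz [NormedSpace ℝ V] (hK : 0 < K) (hθ : 0 < θ)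
    (hu : ∀ t ≥ t₀, HasDerivAt u (u' t) t)
    (hf : ∀ t ≥ t₀, HasDerivAt f (-‖u' t‖ ^ 2) t) (hf0 : ∀ t ≥ t₀, 0 ≤ f t)
    (hLS : ∀ t ≥ t₀, K * f t ^ (1 - θ) ≤ ‖u' t‖) {a b : ℝ} (ha : t₀ ≤ a) (hab : a ≤ b) :
    ‖u b - u a‖ ≤ (f a ^ θ - f b ^ θ) / (θ * K) := by
  have hIcc : ∀ x ∈ Icc a b, t₀ ≤ x := fun x hx => ha.trans hx.1
  have hB : ∀ x ∈ Ico a b, HasDerivWithinAt (fun t => (f a ^ θ - f t ^ θ) / (θ * K))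
      (‖u' x‖ ^ 2 * f x ^ (θ - 1) / K) (Ici x) x := fun x hx =>
    (((hasDerivWithinAt_rpow_of_hasDerivAt_neg_sq hθ.ne' hf hf0 (hIcc x
      (Ico_subset_Icc_self hx))).const_sub _).div_const _).congr_deriv (by field_simp)
  refine image_norm_le_of_norm_deriv_right_le_deriv_boundary' (a := a) (b := b)
    (f := fun t => u t - u a) (B := fun t => (f a ^ θ - f t ^ θ) / (θ * K))
    (fun x hx => ((hu x (hIcc x hx)).continuousAt.sub continuousAt_const).continuousWithinAt)
    (fun x hx => ((hu x (hIcc x (Ico_subset_Icc_self hx))).sub_const _).hasDerivWithinAt)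
    (by simp) ?_ hB (fun x hx => ?_) ⟨hab, le_rfl⟩
  · refine ContinuousOn.div_const (continuousOn_const.sub (ContinuousOn.rpow_const ?_
      fun _ _ => Or.inr hθ.le)) _
    exact fun x hx => (hf x (hIcc x hx)).continuousAt.continuousWithinAt
  · have hx' := hIcc x (Ico_subset_Icc_self hx)
    rcases (hf0 x hx').eq_or_lt with hfx | hfx
    · simp [velocity_eq_zero_of_energy_eq_zero hf hf0 hx' hfx.symm]
    · exact le_sq_mul_rpow_div_of_mul_rpow_le hK hfx (norm_nonneg _) (hLS x hx')

theorem norm_sub_le_of_tendsto_of_lojasiewicz [NormedSpace ℝ V] {uinf : V} (hK : 0 < K)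
    (hθ : 0 < θ) (hu : ∀ t ≥ t₀, HasDerivAt u (u' t) t)
    (hf : ∀ t ≥ t₀, HasDerivAt f (-‖u' t‖ ^ 2) t) (hf0 : ∀ t ≥ t₀, 0 ≤ f t)
    (hLS : ∀ t ≥ t₀, K * f t ^ (1 - θ) ≤ ‖u' t‖) (hlim : Tendsto u atTop (nhds uinf))
    {t : ℝ} (ht : t₀ ≤ t) : ‖u t - uinf‖ ≤ f t ^ θ / (θ * K) := by
  rw [norm_sub_rev]
  refine le_of_tendsto (hlim.sub_const (u t)).norm ?_
  filter_upwards [eventually_ge_atTop t] with b hb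
  calc ‖u b - u t‖ ≤ (f t ^ θ - f b ^ θ) / (θ * K) :=
        norm_sub_le_of_lojasiewicz hK hθ hu hf hf0 hLS ht hb
    _ ≤ f t ^ θ / (θ * K) := by
        gcongr
        exact sub_le_self _ (rpow_nonneg (hf0 b (ht.trans hb)) θ)

end LojasiewiczFlow

theorem polynomial_decay_to_equilibrium_general
    {H : Type*} [NormedAddCommGroup H] [InnerProductSpace ℝ H]
    (u u' : ℝ → H) (E : H → ℝ) (e₀ K θ t₀ : ℝ) (uinf : H)
    (hu : ∀ s ≥ (0 : ℝ), HasDerivAt u (u' s) s)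
    (hK : 0 < K) (hθ : θ ∈ Set.Ioo (0 : ℝ) (1 / 2)) (ht₀ : 0 ≤ t₀)
    (hderiv : ∀ t ≥ (0 : ℝ), HasDerivAt (fun s => E (u s)) (-‖u' t‖ ^ 2) t)
    (hE : ∀ t ≥ t₀, E (u t) ≥ e₀)
    (hLS : ∀ t ≥ t₀, ‖u' t‖ ≥ K * (E (u t) - e₀) ^ (1 - θ))
    (hlim : Tendsto u atTop (nhds uinf)) :
    ∃ κ > (0 : ℝ), ∀ t ≥ t₀,
      ‖u t - uinf‖ ≤ κ * (1 + t) ^ (-(θ / (1 - 2 * θ))) := by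
  obtain ⟨hθ0, hθ2⟩ := hθ
  set f : ℝ → ℝ := fun t => E (u t) - e₀
  have hu₀ : ∀ t ≥ t₀, HasDerivAt u (u' t) t := fun t ht => hu t (ht₀.trans ht)
  have hf : ∀ t ≥ t₀, HasDerivAt f (-‖u' t‖ ^ 2) t := fun t ht =>
    (hderiv t (ht₀.trans ht)).sub_const e₀
  have hf0 : ∀ t ≥ t₀, 0 ≤ f t := fun t ht => sub_nonneg.2 (hE t ht)
  have hODE : ∀ t ≥ t₀, -‖u' t‖ ^ 2 ≤ -K ^ 2 * f t ^ (1 + (1 - 2 * θ)) := fun t ht => by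
    have hsq := pow_le_pow_left₀ (mul_nonneg hK.le (rpow_nonneg (hf0 t ht) _)) (hLS t ht) 2
    rw [show 1 + (1 - 2 * θ) = (1 - θ) * (2 : ℕ) by push_cast; ring,
      rpow_mul_natCast (hf0 t ht)]
    linarith [mul_pow K (f t ^ (1 - θ)) 2]
  obtain ⟨C, hC, hdecay⟩ := exists_le_mul_one_add_rpow_neg_of_hasDerivAt_le (by linarith)
    (pow_pos hK 2) (by linarith) hf hf0 hODE
  refine ⟨C ^ θ / (θ * K), by positivity, fun t ht => ?_⟩
  calc ‖u t - uinf‖ ≤ f t ^ θ / (θ * K) :=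
        norm_sub_le_of_tendsto_of_lojasiewicz hK hθ0 hu₀ hf hf0 hLS hlim ht
    _ ≤ (C * (1 + t) ^ (-(1 - 2 * θ)⁻¹)) ^ θ / (θ * K) := by
        gcongr
        exacts [hf0 t ht, hdecay t ht]
    _ = C ^ θ / (θ * K) * (1 + t) ^ (-(θ / (1 - 2 * θ))) := by
        rw [mul_rpow hC.le (rpow_nonneg (by linarith) _), ← rpow_mul (by linarith)]
        ring_nf

/-- Polynomial decay rate to equilibrium in the case `0 < θ < 1/2`. -/
theorem polynomial_decay_to_equilibrium
    {H : Type*} [NormedAddCommGroup H] [InnerProductSpace ℝ H]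
    (u u' : ℝ → H) (E : H → ℝ) (e₀ K θ t₀ : ℝ) (uinf : H)
    (hu : ∀ s ≥ (0 : ℝ), HasDerivAt u (u' s) s) (hu' : ContinuousOn u' (Set.Ici 0))
    (hK : 0 < K) (hθ : θ ∈ Set.Ioo (0 : ℝ) (1 / 2)) (ht₀ : 0 ≤ t₀)
    (hderiv : ∀ t ≥ (0 : ℝ), HasDerivAt (fun s => E (u s)) (-‖u' t‖ ^ 2) t)
    (hE : ∀ t ≥ t₀, E (u t) ≥ e₀)
    (hLS : ∀ t ≥ t₀, ‖u' t‖ ≥ K * (E (u t) - e₀) ^ (1 - θ))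
    (hlim : Tendsto u atTop (nhds uinf)) :
    ∃ κ > (0 : ℝ), ∀ t ≥ t₀,
      ‖u t - uinf‖ ≤ κ * (1 + t) ^ (-(θ / (1 - 2 * θ))) :=
  polynomial_decay_to_equilibrium_general u u' E e₀ K θ t₀ uinf hu hK hθ ht₀ hderiv hE hLS hlim
end
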